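/- arXiv:0708.1774 — 2 statements merged into one kernel-verified Lean document; each statement's English description precedes it below -/
import Mathlib

section
/- Let M be a real skew-symmetric d×d matrix, ∇⊥ the associated first-order operator, and ψ a C³ complex-valued function on ℝ^d. Set A₀ = ∇⊥(ψ²), the vector field with components Σ_j M_{ij} ∂_j(ψ²). Then (A₀ · i∇ + i∇ · A₀)ψ = 0, i.e., Σ_i [ A₀_i · i ∂_i ψ + i ∂_i ( A₀_i ψ ) ] = 0. -/
/-! The `i`-th component of `∇⊥f` is the derivative of `f` along the `i`-th row of `M`, so
`A₀ = ∇⊥(ψ²) = 2ψ ∇⊥ψ`, and the product rule turns the symmetrized operator applied to `ψ` into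
`2i A₀·∇ψ + iψ ∇·A₀ = 4iψ (∇⊥ψ·∇ψ) + iψ ∇·∇⊥(ψ²)`. Both terms pair the antisymmetric `M` with a
symmetric matrix, `∂ᵢψ ∂ⱼψ` and the Hessian of `ψ²` respectively, and therefore vanish. -/

open Finset

theorem sum_sum_smul_eq_zero_of_antisymm_of_symm {ι R F : Type*} [Fintype ι] [Ring R]
    [AddCommGroup F] [Module R F] [IsAddTorsionFree F] {M : ι → ι → R}
    (hM : ∀ i j, M i j = -M j i) {q : ι → ι → F} (hq : ∀ i j, q i j = q j i) :
    ∑ i, ∑ j, M i j • q i j = 0 := by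
  refine self_eq_neg.mp ?_
  calc ∑ i, ∑ j, M i j • q i j = ∑ i, ∑ j, M j i • q j i := sum_comm
    _ = -∑ i, ∑ j, M i j • q i j := by
      simp only [← sum_neg_distrib, ← neg_smul, ← hM, hq]

theorem ContinuousLinearMap.apply_eq_sum_smul_single {ι R F : Type*} [Fintype ι] [DecidableEq ι]
    [Semiring R] [TopologicalSpace R] [AddCommMonoid F] [Module R F] [TopologicalSpace F]
    (L : (ι → R) →L[R] F) (v : ι → R) :
    L v = ∑ j, v j • L (Pi.single j 1) := by
  conv_lhs => rw [pi_eq_sum_univ' v]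
  simp only [map_sum, map_smul]

theorem fderiv_fderiv_apply_const {𝕜 E F : Type*} [NontriviallyNormedField 𝕜]
    [NormedAddCommGroup E] [NormedSpace 𝕜 E] [NormedAddCommGroup F] [NormedSpace 𝕜 F]
    {f : E → F} {x : E} (hf : DifferentiableAt 𝕜 (fderiv 𝕜 f) x) (v w : E) :
    fderiv 𝕜 (fun y => fderiv 𝕜 f y v) x w = fderiv 𝕜 (fderiv 𝕜 f) x w v := by
  simp [fderiv_clm_apply hf (differentiableAt_const v)]

section Coordinates

variable {ι : Type*} [Fintype ι] [DecidableEq ι] {M : ι → ι → ℝ}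

theorem sum_fderiv_fderiv_apply_row_eq_zero {F : Type*} [NormedAddCommGroup F] [NormedSpace ℝ F]
    {f : (ι → ℝ) → F} {x : ι → ℝ} (hf : ContDiffAt ℝ 2 f x) (hM : ∀ i j, M i j = -M j i) :
    ∑ i, fderiv ℝ (fun y => fderiv ℝ f y (M i)) x (Pi.single i 1) = 0 := by
  have hf' : DifferentiableAt ℝ (fderiv ℝ f) x :=
    (hf.fderiv_right (m := 1) le_rfl).differentiableAt one_ne_zero
  have hsymm := hf.isSymmSndFDerivAt (by simp)
  have : IsAddTorsionFree F := .of_isTorsionFree ℝ F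
  simp only [fderiv_fderiv_apply_const hf']
  simp only [ContinuousLinearMap.apply_eq_sum_smul_single _ (M _)]
  exact sum_sum_smul_eq_zero_of_antisymm_of_symm hM fun i j => hsymm.eq _ _

theorem sum_apply_row_mul_apply_single_eq_zero (L : (ι → ℝ) →L[ℝ] ℂ) (hM : ∀ i j, M i j = -M j i) :
    ∑ i, L (M i) * L (Pi.single i 1) = 0 := by
  simp only [L.apply_eq_sum_smul_single (M _), sum_mul, smul_mul_assoc]
  exact sum_sum_smul_eq_zero_of_antisymm_of_symm hM fun i j => mul_comm _ _

end Coordinates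

/-- With `M` real skew-symmetric, `∇⊥` the associated first-order operator,
`ψ` a C³ complex function on ℝ^d, and `A₀ = ∇⊥(ψ²)` (components `∑ j, M i j * ∂_j (ψ²)`),
the symmetrized operator satisfies `(A₀ · i∇ + i∇ · A₀)ψ = 0`, i.e.
`∑ i, (A₀_i * (i ∂_i ψ) + i ∂_i (A₀_i ψ)) = 0`. -/
theorem symmetrized_op_on_psi_eq_zero (d : ℕ) (M : Fin d → Fin d → ℝ)
    (hM : ∀ i j, M i j = - M j i)
    (ψ : (Fin d → ℝ) → ℂ) (hψ : ContDiff ℝ 3 ψ)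
    (A₀ : Fin d → (Fin d → ℝ) → ℂ)
    (hA₀ : ∀ i y, A₀ i y = ∑ j, (M i j : ℂ) * fderiv ℝ (fun z => ψ z ^ 2) y (Pi.single j 1))
    (x : Fin d → ℝ) :
    ∑ i, (A₀ i x * (Complex.I * fderiv ℝ ψ x (Pi.single i 1)) +
      Complex.I * fderiv ℝ (fun y => A₀ i y * ψ y) x (Pi.single i 1)) = 0 := by
  have hψ' : Differentiable ℝ ψ := hψ.differentiable (by norm_num)
  have hψ2 : ContDiff ℝ 3 (fun z => ψ z ^ 2) := hψ.pow 2
  have hA : ∀ i, A₀ i = fun y => fderiv ℝ (fun z => ψ z ^ 2) y (M i) := fun i => funext fun y => by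
    simp only [hA₀, ContinuousLinearMap.apply_eq_sum_smul_single _ (M i), Complex.real_smul]
  have hAx : ∀ i, A₀ i x = 2 * ψ x * fderiv ℝ ψ x (M i) := fun i => by
    simp [hA, fderiv_fun_pow 2 (hψ' x)]
  have hA' : ∀ i, DifferentiableAt ℝ (A₀ i) x := fun i => by
    rw [hA]
    exact ((hψ2.fderiv_right (m := 2) (by norm_num)).differentiable (by norm_num) x).clm_apply
      (differentiableAt_const _)
  have hdiv : ∑ i, fderiv ℝ (A₀ i) x (Pi.single i 1) = 0 := by
    simp only [hA]
    exact sum_fderiv_fderiv_apply_row_eq_zero (hψ2.contDiffAt.of_le (by norm_num)) hM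
  have hdot := sum_apply_row_mul_apply_single_eq_zero (fderiv ℝ ψ x) hM
  calc _ = Complex.I * ψ x * ∑ i, fderiv ℝ (A₀ i) x (Pi.single i 1)
        + 4 * Complex.I * ψ x * ∑ i, fderiv ℝ ψ x (M i) * fderiv ℝ ψ x (Pi.single i 1) := by
        simp only [fderiv_fun_mul (hA' _) (hψ' x), hAx, add_apply,
          smul_apply, smul_eq_mul, mul_sum, ← sum_add_distrib]
        exact sum_congr rfl fun i _ => by ring
    _ = 0 := by rw [hdiv, hdot]; ring
end

section
/- Let H₀ = -Δ + V₀ with V₀ real-valued and smooth, satisfying a unique continuation principle (any solution of (H₀ - E)φ = 0 vanishing on a nonempty open set vanishes identically). Suppose ψ₀ is a nonzero C² solution of (H₀ - E₊)ψ₀ = 0 on ℝ^d with Re( i ∇ψ₀(x) · conj(ψ₀(x)) ) ≡ 0. Then ψ₀ is collinear to a real-valued function: there exist a real-valued function f and η ∈ ℂ with |η| = 1 such that ψ₀ = η f. -/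
/-- Let `H₀ = -Δ + V₀` with `V₀` real and smooth, satisfying a unique
continuation principle at energy `Eplus`. If `ψ₀` is a nonzero C² solution of
`(H₀ - Eplus)ψ₀ = 0` with `Re(i ∇ψ₀ conj(ψ₀)) ≡ 0`, then `ψ₀` is collinear to a
real-valued function: `ψ₀ = η f` with `f` real-valued and `|η| = 1`. -/
theorem collinear_to_real (d : ℕ) (V₀ : (Fin d → ℝ) → ℝ) (hV : ContDiff ℝ (⊤ : ℕ∞) V₀)
    (Eplus : ℝ)
    (hUCP : ∀ φ : (Fin d → ℝ) → ℂ, ContDiff ℝ 2 φ →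
      (∀ x, -(∑ i, fderiv ℝ (fun y => fderiv ℝ φ y (Pi.single i 1)) x (Pi.single i 1)) +
        (V₀ x : ℂ) * φ x = (Eplus : ℂ) * φ x) →
      (∃ U : Set (Fin d → ℝ), IsOpen U ∧ U.Nonempty ∧ ∀ x ∈ U, φ x = 0) →
      ∀ x, φ x = 0)
    (ψ₀ : (Fin d → ℝ) → ℂ) (hψC : ContDiff ℝ 2 ψ₀) (hne : ψ₀ ≠ 0)
    (heq : ∀ x, -(∑ i, fderiv ℝ (fun y => fderiv ℝ ψ₀ y (Pi.single i 1)) x (Pi.single i 1)) +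
      (V₀ x : ℂ) * ψ₀ x = (Eplus : ℂ) * ψ₀ x)
    (hJ : ∀ x j, (Complex.I * fderiv ℝ ψ₀ x (Pi.single j 1) * (starRingEnd ℂ) (ψ₀ x)).re = 0) :
    ∃ (f : (Fin d → ℝ) → ℝ) (η : ℂ), ‖η‖ = 1 ∧ ∀ x, ψ₀ x = η * (f x : ℂ) := by
  classical
  obtain ⟨x₀, hx₀⟩ : ∃ x, ψ₀ x ≠ 0 := by
    by_contra h; push_neg at h; exact hne (funext h)
  set c : ℂ := ψ₀ x₀ with hc
  have hcn : ‖c‖ ≠ 0 := norm_ne_zero_iff.mpr hx₀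
  have hcpos : (0:ℝ) < ‖c‖ := norm_pos_iff.mpr hx₀
  set η : ℂ := c / ‖c‖ with hηdef
  have hη1 : ‖η‖ = 1 := by
    rw [hηdef, norm_div, Complex.norm_real, Real.norm_of_nonneg (norm_nonneg c), div_self hcn]
  set q : ℂ := (starRingEnd ℂ) η with hqdef
  have hqη : q * η = 1 := by
    rw [hqdef, mul_comm, Complex.mul_conj]
    norm_cast
    rw [Complex.normSq_eq_norm_sq, hη1]
    norm_num
  have hqc : q * c = (‖c‖ : ℂ) := by
    rw [hqdef, hηdef, map_div₀, Complex.conj_ofReal, div_mul_eq_mul_div, mul_comm,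
      Complex.mul_conj, Complex.normSq_eq_norm_sq]
    push_cast
    have habs : (‖c‖ : ℂ) ≠ 0 := by
      exact_mod_cast hcn
    rw [div_eq_iff habs]
    ring
  -- derivatives of ψ₀
  have hψd : Differentiable ℝ ψ₀ := hψC.differentiable (by norm_num)
  have hDψc : ContDiff ℝ 1 (fderiv ℝ ψ₀) := hψC.fderiv_right (by norm_num)
  set u : (Fin d → ℝ) → ℝ := fun x => (q * ψ₀ x).re with hudef
  set v : (Fin d → ℝ) → ℝ := fun x => (q * ψ₀ x).im with hvdef
  have hux₀ : u x₀ = ‖c‖ := by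
    rw [hudef]; simp only [← hc, hqc, Complex.ofReal_re]
  have hvx₀ : v x₀ = 0 := by
    rw [hvdef]; simp only [← hc, hqc, Complex.ofReal_im]
  have hgd : ∀ x, HasFDerivAt (fun y => q * ψ₀ y) (q • fderiv ℝ ψ₀ x) x := fun x =>
    ((hψd x).hasFDerivAt).const_mul q
  have hud : ∀ x, HasFDerivAt u (Complex.reCLM.comp (q • fderiv ℝ ψ₀ x)) x := fun x =>
    (Complex.reCLM.hasFDerivAt).comp x (hgd x)
  have hvd : ∀ x, HasFDerivAt v (Complex.imCLM.comp (q • fderiv ℝ ψ₀ x)) x := fun x =>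
    (Complex.imCLM.hasFDerivAt).comp x (hgd x)
  -- pointwise current relation
  have hJ' : ∀ x j, ((fderiv ℝ ψ₀ x (Pi.single j 1)) * (starRingEnd ℂ) (ψ₀ x)).im = 0 := by
    intro x j
    have h := hJ x j
    rw [mul_assoc] at h
    simp only [Complex.mul_re, Complex.mul_im, Complex.I_re, Complex.I_im,
      Complex.conj_re, Complex.conj_im] at h
    simp only [Complex.mul_im, Complex.conj_re, Complex.conj_im]
    ring_nf at h ⊢
    linarith
  have hqq : q * (starRingEnd ℂ) q = 1 := by
    rw [hqdef, Complex.conj_conj]; exact hqη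
  -- key relation for coordinate directions
  have hrelj : ∀ x j, u x * ((q • fderiv ℝ ψ₀ x) (Pi.single j 1)).im
      = v x * ((q • fderiv ℝ ψ₀ x) (Pi.single j 1)).re := by
    intro x j
    set z : ℂ := fderiv ℝ ψ₀ x (Pi.single j 1) with hz
    set p : ℂ := ψ₀ x with hp
    have h1 : (q * z) * (starRingEnd ℂ) (q * p) = z * (starRingEnd ℂ) p := by
      rw [map_mul]
      linear_combination (z * (starRingEnd ℂ) p) * hqq
    have h2 : ((q * z) * (starRingEnd ℂ) (q * p)).im = 0 := by
      rw [h1]; exact hJ' x j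
    have hs : (q • fderiv ℝ ψ₀ x) (Pi.single j 1) = q * z := by
      simp [hz, smul_eq_mul]
    rw [hs]
    simp only [hudef, hvdef, ← hp]
    simp only [Complex.mul_im, Complex.mul_re, Complex.conj_re, Complex.conj_im] at h2 ⊢
    ring_nf at h2 ⊢
    linarith
  -- extend to CLM identity
  have hkey : ∀ x, (u x) • (Complex.imCLM.comp (q • fderiv ℝ ψ₀ x))
      = (v x) • (Complex.reCLM.comp (q • fderiv ℝ ψ₀ x)) := by
    intro x
    apply ContinuousLinearMap.coe_injective
    apply Module.Basis.ext (Pi.basisFun ℝ (Fin d))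
    intro j
    have := hrelj x j
    simp only [Pi.basisFun_apply]
    simpa [smul_eq_mul] using this
  have hrel : ∀ x w, u x * ((q • fderiv ℝ ψ₀ x) w).im = v x * ((q • fderiv ℝ ψ₀ x) w).re := by
    intro x w
    have := ContinuousLinearMap.ext_iff.mp (hkey x) w
    simpa [smul_eq_mul] using this
  -- open ball where u > 0
  have hucont : Continuous u := by
    have : Continuous ψ₀ := hψC.continuous
    exact Complex.continuous_re.comp ((continuous_const.mul this))
  have hUopen : IsOpen (u ⁻¹' Set.Ioi (0:ℝ)) := isOpen_Ioi.preimage hucont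
  have hx₀U : x₀ ∈ u ⁻¹' Set.Ioi (0:ℝ)  := by
    simp only [Set.mem_preimage, Set.mem_Ioi, hux₀]; exact hcpos
  obtain ⟨r, hr, hball⟩ := Metric.isOpen_iff.mp hUopen x₀ hx₀U
  have hupos : ∀ y ∈ Metric.ball x₀ r, 0 < u y := fun y hy => hball hy
  -- v vanishes on the ball : v/u is constant
  have hconst : ∀ y ∈ Metric.ball x₀ r, v y / u y = v x₀ / u x₀ := by
    intro y hy
    have hdiff : ∀ z ∈ Metric.ball x₀ r, HasFDerivAt (fun t => v t / u t)
        (0 : (Fin d → ℝ) →L[ℝ] ℝ) z := by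
      intro z hz
      have huz : u z ≠ 0 := ne_of_gt (hupos z hz)
      have hinv : HasFDerivAt (fun t => (u t)⁻¹)
          ((-(ContinuousLinearMap.mulLeftRight ℝ ℝ (u z)⁻¹ (u z)⁻¹)).comp
            (Complex.reCLM.comp (q • fderiv ℝ ψ₀ z))) z :=
        (hasFDerivAt_inv' huz).comp z (hud z)
      have hmul := (hvd z).mul hinv
      have h0 : (v z • ((-(ContinuousLinearMap.mulLeftRight ℝ ℝ (u z)⁻¹ (u z)⁻¹)).comp
            (Complex.reCLM.comp (q • fderiv ℝ ψ₀ z)))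
          + (u z)⁻¹ • (Complex.imCLM.comp (q • fderiv ℝ ψ₀ z)))
          = (0 : (Fin d → ℝ) →L[ℝ] ℝ) := by
        ext w
        have hw := hrel z w
        simp only [ContinuousLinearMap.smul_apply, smul_eq_mul, Complex.mul_im,
          Complex.mul_re] at hw
        simp only [ContinuousLinearMap.add_apply, ContinuousLinearMap.smul_apply,
          ContinuousLinearMap.comp_apply, ContinuousLinearMap.neg_apply,
          ContinuousLinearMap.mulLeftRight_apply, ContinuousLinearMap.zero_apply,
          Complex.reCLM_apply, Complex.imCLM_apply, smul_eq_mul, Complex.mul_im,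
          Complex.mul_re]
        field_simp
        linear_combination hw
      have : HasFDerivAt (fun t => v t * (u t)⁻¹)
          (0 : (Fin d → ℝ) →L[ℝ] ℝ) z := by
        rw [← h0]; exact hmul
      simpa [div_eq_mul_inv] using this
    have hx₀b : x₀ ∈ Metric.ball x₀ r := Metric.mem_ball_self hr
    have := (convex_ball x₀ r).is_const_of_fderivWithin_eq_zero
      (f := fun t => v t / u t)
      (fun z hz => ((hdiff z hz).differentiableAt).differentiableWithinAt)
      (fun z hz => by
        rw [DifferentiableAt.fderivWithin ((hdiff z hz).differentiableAt)
          ((Metric.isOpen_ball.uniqueDiffOn) z hz)]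
        exact (hdiff z hz).fderiv) hy hx₀b
    exact this
  have hvball : ∀ y ∈ Metric.ball x₀ r, v y = 0 := by
    intro y hy
    have h := hconst y hy
    rw [hvx₀] at h
    simp only [zero_div] at h
    have huy : u y ≠ 0 := ne_of_gt (hupos y hy)
    field_simp at h
    simpa using h
  -- unique continuation on Im(q ψ₀)
  set S : ℂ →L[ℝ] ℂ :=
    Complex.ofRealCLM.comp (Complex.imCLM.comp (q • ContinuousLinearMap.id ℝ ℂ)) with hSdef
  have hSapp : ∀ z : ℂ, S z = ((q * z).im : ℂ) := by
    intro z; simp [hSdef, smul_eq_mul]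
  set φ : (Fin d → ℝ) → ℂ := fun x => S (ψ₀ x) with hφdef
  have hφval : ∀ x, φ x = ((v x : ℝ) : ℂ) := by
    intro x; show S (ψ₀ x) = _; rw [hSapp]
  have hφC : ContDiff ℝ 2 φ := S.contDiff.comp hψC
  have hφd1 : ∀ y, fderiv ℝ φ y = S.comp (fderiv ℝ ψ₀ y) := fun y =>
    (S.hasFDerivAt.comp y (hψd y).hasFDerivAt).fderiv
  have hGd : ∀ (i : Fin d), Differentiable ℝ (fun y => fderiv ℝ ψ₀ y (Pi.single i 1)) := by
    intro i
    exact (hDψc.differentiable one_ne_zero).clm_apply (differentiable_const _)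
  have hφeq : ∀ x, -(∑ i, fderiv ℝ (fun y => fderiv ℝ φ y (Pi.single i 1)) x (Pi.single i 1)) +
      (V₀ x : ℂ) * φ x = (Eplus : ℂ) * φ x := by
    intro x
    have hstep : ∀ i : Fin d, fderiv ℝ (fun y => fderiv ℝ φ y (Pi.single i 1)) x (Pi.single i 1)
        = S (fderiv ℝ (fun y => fderiv ℝ ψ₀ y (Pi.single i 1)) x (Pi.single i 1)) := by
      intro i
      have hfe : (fun y => fderiv ℝ φ y (Pi.single i 1))
          = fun y => S (fderiv ℝ ψ₀ y (Pi.single i 1)) := by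
        funext y; rw [hφd1 y]; rfl
      rw [hfe]
      have := (S.hasFDerivAt.comp x ((hGd i x).hasFDerivAt)).fderiv
      rw [show (fun y => S (fderiv ℝ ψ₀ y (Pi.single i 1)))
          = S ∘ (fun y => fderiv ℝ ψ₀ y (Pi.single i 1)) from rfl, this]
      rfl
    simp only [hstep]
    rw [← map_sum S]
    have hA : (∑ i, fderiv ℝ (fun y => fderiv ℝ ψ₀ y (Pi.single i 1)) x (Pi.single i 1))
        = (V₀ x : ℂ) * ψ₀ x - (Eplus : ℂ) * ψ₀ x := by
      have := heq x; linear_combination -this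
    rw [hA, hφval x]
    rw [hSapp]
    have : (q * ((V₀ x : ℂ) * ψ₀ x - (Eplus : ℂ) * ψ₀ x)).im = (V₀ x - Eplus) * v x := by
      rw [hvdef]
      simp only [mul_sub]
      rw [show q * ((V₀ x : ℂ) * ψ₀ x) = (V₀ x : ℂ) * (q * ψ₀ x) by ring,
        show q * ((Eplus : ℂ) * ψ₀ x) = (Eplus : ℂ) * (q * ψ₀ x) by ring]
      simp [Complex.sub_im, Complex.mul_im, Complex.ofReal_re, Complex.ofReal_im]
      ring
    rw [this]
    push_cast
    ring
  have hzero := hUCP φ hφC hφeq ⟨Metric.ball x₀ r, Metric.isOpen_ball,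
    ⟨x₀, Metric.mem_ball_self hr⟩, fun y hy => by
      rw [hφval y, hvball y hy]; norm_num⟩
  have hv0 : ∀ x, v x = 0 := by
    intro x
    have := hzero x
    rw [hφval x] at this
    exact_mod_cast this
  refine ⟨u, η, hη1, fun x => ?_⟩
  have hqψ : q * ψ₀ x = ((u x : ℝ) : ℂ) := by
    apply Complex.ext
    · simp [hudef]
    · simp [hv0 x, hvdef]
      have := hv0 x
      rw [hvdef] at this
      simpa using this
  have : η * (q * ψ₀ x) = ψ₀ x := by
    rw [← mul_assoc, mul_comm η q, hqη, one_mul]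
  rw [← this, hqψ]
end
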